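/- If G and H are finite simple graphs such that G is connected, then ξ(G⊙H) ≤ β(Ĝ)·n(H) + n(G). -/

import Mathlib

/-!
Take a minimum vertex cover `C` of `Ĝ` and let `S` consist of all vertices of `G` and of the
copies `H_i` with `i ∈ C`. In the corona, `d(v, x) = d_G(v, i) + 1` for every vertex `v` of `G`
and `x ∈ H_i`. Two vertices outside `S` lie in copies `H_i`, `H_j` with `i, j ∉ C`; then
`B_G(i|j) ≠ ∅` (trivially if `i = j`, and because `ij` is not an edge of `Ĝ` otherwise), and any
`v ∈ B_G(i|j)` is equidistant from them.
-/

universe u v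

variable {V : Type u} {W : Type v}

/-- A distance-equalizer set of a graph: for every pair of distinct vertices outside `S`
there is a vertex of `S` equidistant to both. -/
def IsDistEqSet {α : Type*} (G : SimpleGraph α) (S : Set α) : Prop :=
  ∀ ⦃x y : α⦄, x ∉ S → y ∉ S → x ≠ y → ∃ w ∈ S, G.dist w x = G.dist w y

/-- The equidistant dimension of a graph: the minimum cardinality of a distance-equalizer set. -/
noncomputable def eqdim {α : Type*} (G : SimpleGraph α) : ℕ :=
  sInf {n | ∃ S : Set α, IsDistEqSet G S ∧ S.ncard = n}

/-- The bisector of two vertices: vertices equidistant to both. -/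
def bisector {α : Type*} (G : SimpleGraph α) (x y : α) : Set α :=
  {w | G.dist w x = G.dist w y}

/-- The empty bisector graph of `G`: two distinct vertices are adjacent iff their bisector
in `G` is empty. -/
def emptyBisector {α : Type*} (G : SimpleGraph α) : SimpleGraph α where
  Adj x y := x ≠ y ∧ bisector G x y = ∅
  symm := by
    constructor
    rintro x y ⟨h1, h2⟩
    refine ⟨h1.symm, Set.eq_empty_iff_forall_notMem.mpr fun w hw => ?_⟩
    exact Set.eq_empty_iff_forall_notMem.mp h2 w
      ((show G.dist w y = G.dist w x from hw).symm)
  loopless := ⟨fun _ h => h.1 rfl⟩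

/-- A vertex cover of a graph: a set of vertices meeting every edge. -/
def IsVertexCover {α : Type*} (G : SimpleGraph α) (C : Set α) : Prop :=
  ∀ ⦃x y : α⦄, G.Adj x y → x ∈ C ∨ y ∈ C

/-- An independent set of a graph: a set of pairwise non-adjacent vertices. -/
def IsIndepSet {α : Type*} (G : SimpleGraph α) (A : Set α) : Prop :=
  ∀ ⦃x y : α⦄, x ∈ A → y ∈ A → ¬ G.Adj x y

/-- The vertex cover number `β(G)`. -/
noncomputable def vcNum {α : Type*} (G : SimpleGraph α) : ℕ :=
  sInf {n | ∃ C : Set α, IsVertexCover G C ∧ C.ncard = n}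

/-- The independence number `α(G)`. -/
noncomputable def indepNum {α : Type*} (G : SimpleGraph α) : ℕ :=
  sSup {n | ∃ A : Set α, IsIndepSet G A ∧ A.ncard = n}

/-- A forward-equalized pair `(X, Y)` of `G`: `X ∪ Y = V(G)` and for every
`a ∈ X \ Y` and `b ∈ Y \ X` there is `w` with `d(w,a) = d(w,b) + 1`. -/
def IsForwardEqualizedPair {α : Type*} (G : SimpleGraph α) (X Y : Set α) : Prop :=
  X ∪ Y = Set.univ ∧
  ∀ ⦃a⦄, a ∈ X \ Y → ∀ ⦃b⦄, b ∈ Y \ X → ∃ w, G.dist w a = G.dist w b + 1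

/-- `β*(G)`: the minimum of `|X ∩ Y|` over all pairs of vertex covers `X, Y` of the
empty bisector graph of `G` such that `(X, Y)` is a forward-equalized pair of `G`. -/
noncomputable def betaStar {α : Type*} (G : SimpleGraph α) : ℕ :=
  sInf {n | ∃ X Y : Set α,
    IsVertexCover (emptyBisector G) X ∧ IsVertexCover (emptyBisector G) Y ∧
    IsForwardEqualizedPair G X Y ∧ (X ∩ Y).ncard = n}

/-- The corona product `G ⊙ H`: one copy of `H` for each vertex `i` of `G` (the vertices
`Sum.inr (i, w)`), with `i` joined to every vertex of its copy. -/
def corona (G : SimpleGraph V) (H : SimpleGraph W) : SimpleGraph (V ⊕ V × W) where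
  Adj x y :=
    match x, y with
    | Sum.inl a, Sum.inl b => G.Adj a b
    | Sum.inl a, Sum.inr p => a = p.1
    | Sum.inr p, Sum.inl a => a = p.1
    | Sum.inr p, Sum.inr q => p.1 = q.1 ∧ H.Adj p.2 q.2
  symm := by
    constructor
    rintro (a | p) (b | q) h
    · exact h.symm
    · exact h
    · exact h
    · exact ⟨h.1.symm, h.2.symm⟩
  loopless := by
    constructor
    rintro (a | p) h
    · exact G.irrefl h
    · exact H.irrefl h.2

namespace SimpleGraph

variable {α : Type*} {G : SimpleGraph α}

theorem Reachable.le_add_dist_of_forall_adj {f : α → ℕ}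
    (hf : ∀ ⦃x y⦄, G.Adj x y → f y ≤ f x + 1) {u v : α} (huv : G.Reachable u v) :
    f v ≤ f u + G.dist u v := by
  suffices ∀ {x : α} (p : G.Walk x v), f v ≤ f x + p.length by
    obtain ⟨p, hp⟩ := huv.exists_walk_length_eq_dist
    exact hp ▸ this p
  intro x p
  induction p with
  | nil => simp
  | cons hxy _ ih => grind [hf hxy, Walk.length_cons]

end SimpleGraph

open SimpleGraph (Reachable Walk dist_le dist_eq_one_iff_adj)

section Corona

variable (G : SimpleGraph V) (H : SimpleGraph W)

def corona.inlHom : G →g corona G H := ⟨Sum.inl, id⟩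

/-- `G.dist a` lifted to the corona, plus one on the copies of `H`: being 1-Lipschitz, it bounds
corona distances from `Sum.inl a` from below. -/
noncomputable def corona.height (a : V) : V ⊕ V × W → ℕ
  | Sum.inl b => G.dist a b
  | Sum.inr q => G.dist a q.1 + 1

theorem corona.height_adj_le (a : V) ⦃x y : V ⊕ V × W⦄ (hxy : (corona G H).Adj x y) :
    corona.height G a y ≤ corona.height G a x + 1 := by
  rcases x with b | p <;> rcases y with c | q
  · have hbc : G.Adj b c := hxy
    have := hbc.reachable.dist_triangle_right a
    simpa only [corona.height, dist_eq_one_iff_adj.mpr hbc] using this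
  · obtain rfl : b = q.1 := hxy
    simp only [corona.height, le_refl]
  · obtain rfl : c = p.1 := hxy
    simp only [corona.height]
    omega
  · obtain ⟨hpq, -⟩ : p.1 = q.1 ∧ H.Adj p.2 q.2 := hxy
    simp only [corona.height, hpq]
    omega

variable {G}

theorem corona.dist_inl_inr {a i : V} (hai : G.Reachable a i) (w : W) :
    (corona G H).dist (Sum.inl a) (Sum.inr (i, w)) = G.dist a i + 1 := by
  obtain ⟨p, hp⟩ := hai.exists_walk_length_eq_dist
  let q : (corona G H).Walk (Sum.inl a) (Sum.inr (i, w)) :=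
    (p.map (corona.inlHom G H)).concat
      (show (corona G H).Adj (Sum.inl i) (Sum.inr (i, w)) from rfl)
  have hq : q.length = G.dist a i + 1 :=
    (Walk.length_concat _ _).trans (congrArg (· + 1) ((Walk.length_map _ _).trans hp))
  have hlower := Reachable.le_add_dist_of_forall_adj (corona.height_adj_le G H a) ⟨q⟩
  simp only [corona.height, SimpleGraph.dist_self, zero_add] at hlower
  exact le_antisymm (hq ▸ dist_le q) hlower

end Corona

section VertexCover

variable {α : Type*}

theorem exists_isVertexCover_ncard_eq_vcNum (G : SimpleGraph α) :
    ∃ C, IsVertexCover G C ∧ C.ncard = vcNum G :=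
  Nat.sInf_mem (s := {n | ∃ C, IsVertexCover G C ∧ C.ncard = n})
    ⟨_, Set.univ, fun x _ _ => Or.inl (Set.mem_univ x), rfl⟩

theorem eqdim_le_ncard {G : SimpleGraph α} {S : Set α} (hS : IsDistEqSet G S) :
    eqdim G ≤ S.ncard :=
  Nat.sInf_le ⟨S, hS, rfl⟩

theorem IsVertexCover.bisector_nonempty {G : SimpleGraph α} {C : Set α}
    (hC : IsVertexCover (emptyBisector G) C) {i j : α} (hi : i ∉ C) (hj : j ∉ C) :
    (bisector G i j).Nonempty := by
  by_cases hij : i = j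
  · exact ⟨i, congrArg (G.dist i) hij⟩
  rw [Set.nonempty_iff_ne_empty]
  intro hempty
  exact (hC ⟨hij, hempty⟩).elim hi hj

end VertexCover

section EqualizerSet

def corona.equalizerSet (C : Set V) : Set (V ⊕ V × W) :=
  Set.range Sum.inl ∪ Sum.inr '' (C ×ˢ Set.univ)

theorem corona.ncard_equalizerSet [Finite V] [Finite W] (C : Set V) :
    (corona.equalizerSet C : Set (V ⊕ V × W)).ncard = C.ncard * Nat.card W + Nat.card V := by
  have hdisj : Disjoint (Set.range (Sum.inl : V → V ⊕ V × W)) (Sum.inr '' (C ×ˢ Set.univ)) :=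
    Set.disjoint_left.mpr fun _ ⟨_, ha⟩ ⟨_, _, hb⟩ => Sum.inr_ne_inl (hb.trans ha.symm)
  rw [corona.equalizerSet, Set.ncard_union_eq hdisj,
    Set.ncard_range_of_injective Sum.inl_injective,
    Set.ncard_image_of_injective _ Sum.inr_injective, Set.ncard_prod, Set.ncard_univ, add_comm]

theorem corona.isDistEqSet_equalizerSet {G : SimpleGraph V} (H : SimpleGraph W) (hG : G.Connected)
    {C : Set V} (hC : IsVertexCover (emptyBisector G) C) :
    IsDistEqSet (corona G H) (corona.equalizerSet C) := by
  rintro (a | ⟨i, u⟩) (b | ⟨j, u'⟩) hx hy -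
  · exact (hx (Or.inl ⟨a, rfl⟩)).elim
  · exact (hx (Or.inl ⟨a, rfl⟩)).elim
  · exact (hy (Or.inl ⟨b, rfl⟩)).elim
  have hi : i ∉ C := fun hi => hx (Or.inr ⟨(i, u), ⟨hi, trivial⟩, rfl⟩)
  have hj : j ∉ C := fun hj => hy (Or.inr ⟨(j, u'), ⟨hj, trivial⟩, rfl⟩)
  obtain ⟨v, hv⟩ := hC.bisector_nonempty hi hj
  refine ⟨Sum.inl v, Or.inl ⟨v, rfl⟩, ?_⟩
  rw [corona.dist_inl_inr H (hG v i), corona.dist_inl_inr H (hG v j), hv]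

end EqualizerSet

theorem eqdim_corona_upper_bound_general [Fintype V] [Fintype W]
    (G : SimpleGraph V) (H : SimpleGraph W) (hG : G.Connected) :
    eqdim (corona G H) ≤ vcNum (emptyBisector G) * Fintype.card W + Fintype.card V := by
  obtain ⟨C, hC, hCcard⟩ := exists_isVertexCover_ncard_eq_vcNum (emptyBisector G)
  calc eqdim (corona G H) ≤ (corona.equalizerSet C).ncard :=
        eqdim_le_ncard (corona.isDistEqSet_equalizerSet H hG hC)
    _ = vcNum (emptyBisector G) * Fintype.card W + Fintype.card V := by
        rw [corona.ncard_equalizerSet, hCcard, Nat.card_eq_fintype_card, Nat.card_eq_fintype_card]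

/-- `ξ(G ⊙ H) ≤ β(Ĝ)·n(H) + n(G)`. -/
theorem eqdim_corona_upper_bound [Fintype V] [Fintype W] [Nonempty W]
    (G : SimpleGraph V) (H : SimpleGraph W) (hG : G.Connected) :
    eqdim (corona G H) ≤ vcNum (emptyBisector G) * Fintype.card W + Fintype.card V :=
  eqdim_corona_upper_bound_general G H hG
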